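/- If D is a normal (checkerboard colorable) twisted link diagram, then its double covering diagram φ(D) is normal: the checkerboard coloring of the abstract link diagram of D, together with the mirror coloring on the reflected diagram D*, extends across the bar-replacement bands to a checkerboard coloring of the abstract link diagram of φ(D). -/
import Mathlib


/-- A combinatorial model of a twisted link diagram: edges `S`, traversal
successor `next`; the gap after an edge may be a classical crossing passage
(`classicalGap`) or carry a bar (`barGap`).  Classical crossings `C` are passed
twice, just after the edges `passes c 0` and `passes c 1`. -/
structure TwistedDiagram where
  S : Type
  next : S ≃ S
  classicalGap : S → Bool
  barGap : S → Bool
  C : Type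
  passes : C → Fin 2 → S
  passes_classical : ∀ c k, classicalGap (passes c k) = true
  classical_covered : ∀ s, classicalGap s = true → ∃ c k, passes c k = s
  bar_not_classical : ∀ s, ¬(classicalGap s = true ∧ barGap s = true)

/-- `D` is normal: the associated abstract link diagram is checkerboard
colorable, equivalently `D` admits an alternate orientation, reversing exactly
at classical crossings and at bars, with the two strands at each classical
crossing oppositely oriented. -/
def IsNormal (D : TwistedDiagram) : Prop :=
  ∃ o : D.S → ZMod 2,
    (∀ s, o (D.next s) = o s + (if D.classicalGap s then 1 else 0)
        + (if D.barGap s then 1 else 0)) ∧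
    (∀ c : D.C, o (D.passes c 0) ≠ o (D.passes c 1))

/-- If a twisted link diagram `D` is normal, then its double covering diagram
`φ(D)` is normal.  The double cover consists of two copies of `D` (the copy
`b : Bool` recording `D` or its mirror `D*`), where at each bar the strand
crosses through a band to the other copy (the bands contain only virtual
crossings and no bars), and the classical crossings of each copy are those of
`D`.  The checkerboard coloring of `D` together with the mirror coloring of `D*`
yields an alternate orientation, i.e. a checkerboard coloring, of `φ(D)`. -/
theorem doubleCover_of_normal_isNormal (D : TwistedDiagram)
    (hD : IsNormal D) :
    ∃ o' : D.S × Bool → ZMod 2,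
      (∀ (s : D.S) (b : Bool),
        o' (D.next s, xor (D.barGap s) b)
          = o' (s, b) + (if D.classicalGap s then 1 else 0)) ∧
      (∀ (c : D.C) (b : Bool),
        o' (D.passes c 0, b) ≠ o' (D.passes c 1, b)) := by
  obtain ⟨o, ho, hc⟩ := hD
  refine ⟨fun p => o p.1 + (if p.2 then 1 else 0), ?_, ?_⟩
  · intro s b
    simp only [ho s]
    cases hb : D.barGap s <;> cases b <;> simp <;> ring_nf <;> simp [show (2:ZMod 2) = 0 from rfl]
  · intro c b
    simpa using hc c
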